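/- For every n ≥ 0, the number of type I sequences of length n for n+2 indeterminants equals the Catalan number C_{n+1} = binom(2n+2, n+1)/(n+2); these sequences index the vertices of the Stasheff associahedron K_{n+2}, which correspond bijectively to planar binary rooted trees with n+2 leaves. -/

import Mathlib

/-- A planar rooted tree: either a leaf, or an internal node carrying an ordered list
of subtrees.  (Well-formedness — every internal node has at least two children — is
the separate predicate `PRT.WF`.) -/
inductive PRT : Type where
  | leaf : PRT
  | node : List PRT → PRT

namespace PRT

/-- The number of leaves of a planar rooted tree. -/
def leaves : PRT → ℕ
  | .leaf => 1
  | .node ts => (ts.attach.map (fun t => leaves t.1)).sum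
decreasing_by
  have := List.sizeOf_lt_of_mem t.2
  simp only [PRT.node.sizeOf_spec]
  omega

/-- The number of internal nodes of a planar rooted tree. -/
def nodes : PRT → ℕ
  | .leaf => 0
  | .node ts => 1 + (ts.attach.map (fun t => nodes t.1)).sum
decreasing_by
  have := List.sizeOf_lt_of_mem t.2
  simp only [PRT.node.sizeOf_spec]
  omega

/-- A planar rooted tree is well formed when every internal node carries at least two
subtrees. -/
inductive WF : PRT → Prop where
  | leaf : WF .leaf
  | node (ts : List PRT) (h2 : 2 ≤ ts.length) (h : ∀ t ∈ ts, WF t) : WF (.node ts)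

/-- A planar binary rooted tree: every internal node has exactly two children. -/
inductive Binary : PRT → Prop where
  | leaf : Binary .leaf
  | node (a b : PRT) : Binary a → Binary b → Binary (.node [a, b])

end PRT

/-- `AdmissibleFrom nr s`: the sequence `s` of pairs `(i, ℓ)` is admissible when the
current number of "free" slots is `nr` (i.e. the first operator acts on `nr + 2`
indeterminants): either `i = 0` and `1 ≤ ℓ ≤ nr`, or `1 ≤ i ≤ nr` and
`1 ≤ ℓ ≤ nr + 1 - i`; afterwards `nr` drops by `ℓ`. -/
def AdmissibleFrom : ℕ → List (ℕ × ℕ) → Prop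
  | _, [] => True
  | nr, (i, l) :: rest =>
      ((i = 0 ∧ 1 ≤ l ∧ l ≤ nr) ∨ (1 ≤ i ∧ i ≤ nr ∧ 1 ≤ l ∧ l ≤ nr + 1 - i)) ∧
      AdmissibleFrom (nr - l) rest

/-- A type I sequence for `n + 2` indeterminants: an admissible sequence whose first
indices are weakly decreasing. -/
def TypeISeq (n : ℕ) (s : List (ℕ × ℕ)) : Prop :=
  AdmissibleFrom n s ∧ s.Chain' (fun a b => b.1 ≤ a.1)

/-!
In a type I sequence of length `n` for `n + 2` indeterminants every `ℓ_r` equals `1`, since each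
step uses up at least one of the `n` free slots; so such a sequence is just a weakly decreasing
sequence `i_1 ≥ ⋯ ≥ i_n` with `i_r ≤ n + 1 - r`. Counting these by the value `c` allowed for the
first entry gives the Catalan triangle: its entries satisfy Pascal's rule, whence the count is
`C(n+c+1, c) - C(n+c+1, n+2)`, which for `c = n` is the Catalan number `C_{n+1}`. Binary trees
with `n + 2` leaves are counted by the same number.
-/

open Finset

theorem typeISeq_iff {n : ℕ} {s : List (ℕ × ℕ)} :
    TypeISeq n s ↔ AdmissibleFrom n s ∧ s.IsChain (fun a b => b.1 ≤ a.1) :=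
  Iff.rfl

theorem AdmissibleFrom.length_le {m : ℕ} {s : List (ℕ × ℕ)} (h : AdmissibleFrom m s) :
    s.length ≤ m := by
  induction s generalizing m with
  | nil => simp
  | cons p t ih =>
    obtain ⟨hp, ht⟩ := h
    have := ih ht
    simp only [List.length_cons]
    omega

theorem AdmissibleFrom.fst_head_le {m : ℕ} {s : List (ℕ × ℕ)} (h : AdmissibleFrom m s) :
    ∀ p ∈ s.head?, p.1 ≤ m := by
  rcases s with _ | ⟨⟨i, l⟩, t⟩
  · simp
  · obtain ⟨hil, -⟩ := h
    simp only [List.head?_cons, Option.mem_some_iff, forall_eq']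
    omega

theorem admissibleFrom_cons_iff_of_length_eq {n i l : ℕ} {t : List (ℕ × ℕ)}
    (ht : t.length = n) :
    AdmissibleFrom (n + 1) ((i, l) :: t) ↔ l = 1 ∧ i ≤ n + 1 ∧ AdmissibleFrom n t := by
  constructor
  · rintro ⟨hil, hrest⟩
    have := hrest.length_le
    have hl : l = 1 := by omega
    subst hl
    exact ⟨rfl, by omega, hrest⟩
  · rintro ⟨rfl, hi, hrest⟩
    exact ⟨by omega, hrest⟩

/-- The type I sequences of length `n` for `n + 2` indeterminants whose first index is at
most `c`. -/
def vertexSeqs : ℕ → ℕ → Finset (List (ℕ × ℕ))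
  | 0, _ => {[]}
  | n + 1, c => (range (min c (n + 1) + 1)).biUnion fun j => (vertexSeqs n j).image ((j, 1) :: ·)

theorem mem_vertexSeqs {n c : ℕ} {s : List (ℕ × ℕ)} :
    s ∈ vertexSeqs n c ↔ s.length = n ∧ TypeISeq n s ∧ ∀ p ∈ s.head?, p.1 ≤ c := by
  induction n generalizing c s with
  | zero =>
    simp only [vertexSeqs, mem_singleton, List.length_eq_zero_iff]
    constructor
    · rintro rfl
      exact ⟨rfl, ⟨trivial, List.isChain_nil⟩, by simp⟩
    · exact fun h => h.1
  | succ n ih =>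
    rcases s with _ | ⟨⟨i, l⟩, t⟩
    · simp [vertexSeqs]
    simp only [vertexSeqs, mem_biUnion, mem_range, mem_image, List.cons.injEq, Prod.mk.injEq,
      List.length_cons, Nat.add_right_cancel_iff, typeISeq_iff, List.isChain_cons, List.head?_cons,
      Option.mem_some_iff, forall_eq', ih]
    constructor
    · rintro ⟨j, hj, t', ⟨hlen, ⟨hadm, hchain⟩, hhead⟩, ⟨rfl, rfl⟩, rfl⟩
      refine ⟨hlen, ⟨(admissibleFrom_cons_iff_of_length_eq hlen).2 ⟨rfl, by omega, hadm⟩,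
        hhead, hchain⟩, by omega⟩
    · rintro ⟨hlen, ⟨hadm, hhead, hchain⟩, hic⟩
      obtain ⟨rfl, hi, hadm⟩ := (admissibleFrom_cons_iff_of_length_eq hlen).1 hadm
      exact ⟨i, by omega, t, ⟨hlen, ⟨hadm, hchain⟩, hhead⟩, ⟨rfl, rfl⟩, rfl⟩

theorem card_vertexSeqs_succ (n c : ℕ) :
    #(vertexSeqs (n + 1) c) = ∑ j ∈ range (min c (n + 1) + 1), #(vertexSeqs n j) := by
  rw [vertexSeqs, card_biUnion]
  · exact sum_congr rfl fun j _ => card_image_of_injective _ List.cons_injective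
  · intro j _ k _ hjk
    simp only [Function.onFun, disjoint_left, mem_image]
    rintro _ ⟨_, _, rfl⟩ ⟨_, _, h⟩
    exact hjk (congrArg Prod.fst (List.cons_eq_cons.1 h).1).symm

theorem card_vertexSeqs_zero_right (n : ℕ) : #(vertexSeqs n 0) = 1 := by
  cases n with
  | zero => rfl
  | succ n => simp [card_vertexSeqs_succ, card_vertexSeqs_zero_right n]

theorem vertexSeqs_succ_self (n : ℕ) : vertexSeqs n (n + 1) = vertexSeqs n n := by
  cases n with
  | zero => rfl
  | succ n => simp [vertexSeqs]

theorem card_vertexSeqs_succ_succ {n k : ℕ} (hk : k ≤ n) :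
    #(vertexSeqs (n + 1) (k + 1)) = #(vertexSeqs (n + 1) k) + #(vertexSeqs n (k + 1)) := by
  rw [card_vertexSeqs_succ, card_vertexSeqs_succ, min_eq_left (by omega), min_eq_left (by omega),
    sum_range_succ]

/-- The Catalan triangle entry `C(n+k+1, k) - C(n+k+1, n+2)`, written without subtraction. -/
theorem card_vertexSeqs_add_choose : ∀ k n : ℕ, k ≤ n + 1 →
    #(vertexSeqs n k) + (n + k + 1).choose (n + 2) = (n + k + 1).choose k
  | 0, n, _ => by simp [card_vertexSeqs_zero_right]
  | k + 1, n, hk => by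
    rcases Nat.lt_or_ge k n with hkn | hkn
    · obtain ⟨m, rfl⟩ : ∃ m, n = m + 1 := ⟨n - 1, by omega⟩
      have h₁ := card_vertexSeqs_add_choose k (m + 1) (by omega)
      have h₂ := card_vertexSeqs_add_choose (k + 1) m (by omega)
      rw [card_vertexSeqs_succ_succ (by omega), show m + 1 + (k + 1) + 1 = (m + k + 2) + 1 by omega,
        Nat.choose_succ_succ' (m + k + 2) (m + 2), Nat.choose_succ_succ' (m + k + 2) k]
      rw [show m + 1 + k + 1 = m + k + 2 by omega] at h₁
      rw [show m + (k + 1) + 1 = m + k + 2 by omega] at h₂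
      simp only [Nat.add_assoc, Nat.reduceAdd] at h₁ h₂ ⊢
      omega
    · obtain rfl : n = k := by omega
      have h := card_vertexSeqs_add_choose n n (by omega)
      rw [vertexSeqs_succ_self, show n + (n + 1) + 1 = (n + n + 1) + 1 by omega,
        Nat.choose_succ_succ' (n + n + 1) (n + 1), Nat.choose_succ_succ' (n + n + 1) n]
      simp only [Nat.add_assoc, Nat.reduceAdd] at h ⊢
      omega
termination_by k n => k + n

theorem card_vertexSeqs_self (n : ℕ) : #(vertexSeqs n n) = catalan (n + 1) := by
  have h := card_vertexSeqs_add_choose n n (by omega)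
  rw [show n + n + 1 = 2 * n + 1 by omega] at h
  have hsymm := Nat.choose_symm_half n
  have hstep : (2 * n + 1).choose (n + 2) * (n + 2) = (2 * n + 1).choose (n + 1) * n := by
    have := Nat.choose_succ_right_eq (2 * n + 1) (n + 1)
    rwa [show 2 * n + 1 - (n + 1) = n by omega] at this
  have hcat := succ_mul_catalan_eq_centralBinom (n + 1)
  rw [Nat.centralBinom, show 2 * (n + 1) = 2 * n + 1 + 1 by omega, Nat.choose_succ_succ'] at hcat
  refine Nat.eq_of_mul_eq_mul_left (show 0 < n + 2 by omega) ?_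
  zify at *
  linear_combination (n + 2 : ℤ) * h - hstep - hcat - (n + 1 : ℤ) * hsymm

def typeISeqEquivVertexSeqs (n : ℕ) :
    {s : List (ℕ × ℕ) // s.length = n ∧ TypeISeq n s} ≃ vertexSeqs n n :=
  Equiv.subtypeEquivRight fun s => by
    rw [mem_vertexSeqs, ← and_assoc, iff_self_and]
    exact fun h => h.2.1.fst_head_le

namespace BinaryTree

variable {α : Type*}

def toPRT : BinaryTree α → PRT
  | nil => .leaf
  | node _ l r => .node [l.toPRT, r.toPRT]

theorem binary_toPRT (x : BinaryTree α) : x.toPRT.Binary := by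
  induction x with
  | nil => exact .leaf
  | node _ l r ihl ihr => exact .node _ _ ihl ihr

theorem leaves_toPRT (x : BinaryTree α) : x.toPRT.leaves = x.numLeaves := by
  induction x with
  | nil => simp [toPRT, PRT.leaves]
  | node _ l r ihl ihr => simp [toPRT, PRT.leaves, ihl, ihr]

end BinaryTree

namespace PRT

def toBinaryTree : PRT → BinaryTree Unit
  | .node [a, b] => .node () a.toBinaryTree b.toBinaryTree
  | _ => .nil

theorem toBinaryTree_toPRT (x : BinaryTree Unit) : x.toPRT.toBinaryTree = x := by
  induction x with
  | nil => rfl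
  | node _ l r ihl ihr => simp [BinaryTree.toPRT, toBinaryTree, ihl, ihr]

theorem Binary.toPRT_toBinaryTree {t : PRT} (h : t.Binary) : t.toBinaryTree.toPRT = t := by
  induction h with
  | leaf => rfl
  | node a b _ _ iha ihb => simp [toBinaryTree, BinaryTree.toPRT, iha, ihb]

def binaryEquiv (n : ℕ) :
    {t : PRT // t.Binary ∧ t.leaves = n + 1} ≃ BinaryTree.treesOfNumNodesEq n where
  toFun t := ⟨t.1.toBinaryTree, by
    rw [BinaryTree.mem_treesOfNumNodesEq, ← Nat.add_right_cancel_iff (n := 1),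
      ← BinaryTree.numLeaves_eq_numNodes_succ, ← BinaryTree.leaves_toPRT,
      t.2.1.toPRT_toBinaryTree, t.2.2]⟩
  invFun x := ⟨x.1.toPRT, x.1.binary_toPRT, by
    rw [BinaryTree.leaves_toPRT, BinaryTree.numLeaves_eq_numNodes_succ,
      BinaryTree.mem_treesOfNumNodesEq.1 x.2]⟩
  left_inv t := Subtype.ext t.2.1.toPRT_toBinaryTree
  right_inv x := Subtype.ext (toBinaryTree_toPRT x.1)

end PRT

/-- For every `n ≥ 0`, the number of type I sequences of length `n` for
`n + 2` indeterminants equals the Catalan number `C_{n+1} = (2n+2).choose (n+1) / (n+2)`;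
these sequences index the vertices of the Stasheff associahedron `K_{n+2}`, which
correspond bijectively to planar binary rooted trees with `n + 2` leaves. -/
theorem typeISeq_card_catalan (n : ℕ) :
    Nat.card {s : List (ℕ × ℕ) // s.length = n ∧ TypeISeq n s} =
        (2 * n + 2).choose (n + 1) / (n + 2) ∧
      Nonempty ({s : List (ℕ × ℕ) // s.length = n ∧ TypeISeq n s} ≃
        {t : PRT // t.Binary ∧ t.leaves = n + 2}) := by
  have e := typeISeqEquivVertexSeqs n
  have hcard : #(vertexSeqs n n) = #(BinaryTree.treesOfNumNodesEq (n + 1)) := by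
    rw [card_vertexSeqs_self, BinaryTree.treesOfNumNodesEq_card_eq_catalan]
  refine ⟨?_, ⟨e.trans ((equivOfCardEq hcard).trans (PRT.binaryEquiv (n + 1)).symm)⟩⟩
  rw [Nat.card_congr e, Nat.card_eq_finsetCard, card_vertexSeqs_self, catalan_eq_centralBinom_div,
    Nat.centralBinom, mul_add, mul_one]
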